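/- arXiv:2501.09856 — 4 statements merged into one kernel-verified Lean document; each statement's English description precedes it below -/
import Mathlib

section
/- If node v is non-sending at time t_i (no edges outgoing from v at time t_i) and t_{i+1} is the next time after t_i, then for every depth d ≥ 0: c^{(d+1)}_G(v, t_i) = c^{(d+1)}_G(v, t_{i+1}) if and only if c^{(0)}(v, t_i) = c^{(0)}(v, t_{i+1}). -/
/-! Since `v` sends nothing at times in `[ti, ti1)`, the causal successor sets of `(v, ti)` and
`(v, ti1)` coincide, so at every depth refinement appends the same multiset to both colors, and
equality of colors reduces to equality of initial colors. -/

/-- The type of refinement colors at depth `d`, starting from initial colors in `C0`: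
a depth-`(d+1)` color is a pair of the depth-`d` color and a multiset of depth-`d` colors. -/
def ColorT (C0 : Type) : ℕ → Type
  | 0 => C0
  | d+1 => ColorT C0 d × Multiset (ColorT C0 d)

instance colorTDecEq (C0 : Type) [DecidableEq C0] : ∀ d, DecidableEq (ColorT C0 d)
  | 0 => inferInstanceAs (DecidableEq C0)
  | d+1 => letI := colorTDecEq C0 d
           inferInstanceAs (DecidableEq (ColorT C0 d × Multiset (ColorT C0 d)))

variable {V T C0 : Type} [DecidableEq V] [LinearOrder T]

/-- Causal successor set of temporal node `(v,t)`: endpoints of edges outgoing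
from `v` at times `≥ t`. -/
def succF (E : Finset (V × V × T)) (v : V) (t : T) : Finset (V × T) :=
  (E.filter (fun e => e.1 = v ∧ t ≤ e.2.2)).image (fun e => e.2)

/-- Temporal color refinement (perfect-hash version):
`refine E c0 (d+1) v t = (refine E c0 d v t, multiset of depth-d colors of successors)`. -/
def refine (E : Finset (V × V × T)) (c0 : V → T → C0) :
    (d : ℕ) → V → T → ColorT C0 d
  | 0, v, t => c0 v t
  | d+1, v, t =>
      (refine E c0 d v t,
       (succF E v t).val.map (fun p => refine E c0 d p.1 p.2))

lemma succF_eq_of_forall_notMem_Ico {E : Finset (V × V × T)} {v : V} {t t' : T} (hle : t ≤ t')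
    (h : ∀ e ∈ E, e.1 = v → e.2.2 ∉ Set.Ico t t') :
    succF E v t = succF E v t' := by
  unfold succF
  congr 1
  refine Finset.filter_congr fun e he => and_congr_right fun hv => ?_
  have := h e he hv
  rw [Set.mem_Ico, not_and, not_lt] at this
  exact ⟨this, hle.trans⟩

lemma refine_succ_eq_iff_of_succF_eq {E : Finset (V × V × T)} {c0 : V → T → C0} {v : V}
    {t t' : T} (h : succF E v t = succF E v t') (d : ℕ) :
    refine E c0 (d + 1) v t = refine E c0 (d + 1) v t' ↔
      refine E c0 d v t = refine E c0 d v t' := by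
  rw [refine, refine, h]
  exact Prod.mk_inj.trans (and_iff_left rfl)

lemma refine_eq_iff_of_succF_eq {E : Finset (V × V × T)} {c0 : V → T → C0} {v : V}
    {t t' : T} (h : succF E v t = succF E v t') (d : ℕ) :
    refine E c0 d v t = refine E c0 d v t' ↔ c0 v t = c0 v t' := by
  induction d with
  | zero => rfl
  | succ d ih => exact (refine_succ_eq_iff_of_succF_eq h d).trans ih

theorem nonsending_color_iff_general (E : Finset (V × V × T)) (c0 : V → T → C0)
    (v : V) (ti ti1 : T) (hlt : ti < ti1)
    (hnonsend : ∀ w, (v, w, ti) ∉ E)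
    (hnext : ∀ e ∈ E, ¬ (ti < e.2.2 ∧ e.2.2 < ti1)) (d : ℕ) :
    refine E c0 (d+1) v ti = refine E c0 (d+1) v ti1 ↔ c0 v ti = c0 v ti1 := by
  have hsilent : ∀ e ∈ E, e.1 = v → e.2.2 ∉ Set.Ico ti ti1 := by
    rintro ⟨u, w, s⟩ he rfl ⟨hts, hst⟩
    rcases hts.eq_or_lt with rfl | hts
    · exact hnonsend w he
    · exact hnext _ he ⟨hts, hst⟩
  exact refine_eq_iff_of_succF_eq (succF_eq_of_forall_notMem_Ico hlt.le hsilent) (d + 1)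

/-- **Non-sending nodes keep their colors.** If `v` is non-sending at time `ti`
(no outgoing edges from `v` at `ti`) and `ti1` is the next time (no edge timestamp lies
strictly between `ti` and `ti1`), then for all `d`, the depth-`(d+1)` colors of `(v,ti)`
and `(v,ti1)` agree iff their initial colors agree. -/
theorem nonsending_color_iff [DecidableEq C0] (E : Finset (V × V × T)) (c0 : V → T → C0)
    (v : V) (ti ti1 : T) (hlt : ti < ti1)
    (hnonsend : ∀ w, (v, w, ti) ∉ E)
    (hnext : ∀ e ∈ E, ¬ (ti < e.2.2 ∧ e.2.2 < ti1)) (d : ℕ) :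
    refine E c0 (d+1) v ti = refine E c0 (d+1) v ti1 ↔ c0 v ti = c0 v ti1 :=
  nonsending_color_iff_general E c0 v ti ti1 hlt hnonsend hnext d
end

section
/- Starting from a uniform initial coloring, the number of distinct colors assigned by temporal color refinement at any depth d is at most 1 plus the number of active temporal nodes, which is at most 2E + 1 where E is the number of temporal edges. -/
variable {V T C0 : Type} [DecidableEq V] [LinearOrder T]

/-- Refinement colors depend only on the successor set (for uniform initial coloring). -/
lemma refine_eq_of_succF_eq (E : Finset (V × V × T)) :
    ∀ (d : ℕ) (v v' : V) (t t' : T), succF E v t = succF E v' t' →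
      refine E (fun _ _ => (() : Unit)) d v t = refine E (fun _ _ => (() : Unit)) d v' t'
  | 0, _, _, _, _, _ => rfl
  | d+1, v, v', t, t', h => by
      simp only [refine]
      exact Prod.ext (refine_eq_of_succF_eq E d v v' t t' h) (by rw [h])

/-- Canonical color of a node with empty successor set. -/
def cEmpty : (d : ℕ) → ColorT Unit d
  | 0 => ()
  | d+1 => (cEmpty d, 0)

lemma refine_eq_cEmpty (E : Finset (V × V × T)) :
    ∀ (d : ℕ) (v : V) (t : T), succF E v t = ∅ →
      refine E (fun _ _ => (() : Unit)) d v t = cEmpty d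
  | 0, _, _, _ => rfl
  | d+1, v, t, h => by
      simp only [refine, cEmpty]
      refine Prod.ext (refine_eq_cEmpty E d v t h) ?_
      rw [h]; rfl

/-- Every nonempty successor set is realized at an active node. -/
lemma succF_eq_active (E : Finset (V × V × T)) (v : V) (t : T)
    (h : succF E v t ≠ ∅) :
    ∃ t', (∃ e ∈ E, e.2.2 = t' ∧ (e.1 = v ∨ e.2.1 = v)) ∧
      succF E v t = succF E v t' := by
  classical
  set S := E.filter (fun e => e.1 = v ∧ t ≤ e.2.2) with hS
  have hSne : S.Nonempty := by
    rcases Finset.nonempty_iff_ne_empty.2 h with ⟨p, hp⟩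
    rcases Finset.mem_image.1 hp with ⟨e, he, _⟩
    exact ⟨e, he⟩
  have hTne : (S.image (fun e => e.2.2)).Nonempty := hSne.image _
  set t' := (S.image (fun e => e.2.2)).min' hTne with ht'
  obtain ⟨e₀, he₀S, he₀t⟩ := Finset.mem_image.1 ((S.image (fun e => e.2.2)).min'_mem hTne)
  rcases Finset.mem_filter.1 he₀S with ⟨he₀E, he₀v, hte₀⟩
  refine ⟨t', ⟨e₀, he₀E, he₀t, Or.inl he₀v⟩, ?_⟩
  have htt' : t ≤ t' := ht' ▸ he₀t ▸ hte₀
  unfold succF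
  congr 1
  apply Finset.filter_congr
  intro e heE
  constructor
  · rintro ⟨h1, h2⟩
    refine ⟨h1, ?_⟩
    exact (S.image (fun e => e.2.2)).min'_le e.2.2
      (Finset.mem_image_of_mem _ (Finset.mem_filter.2 ⟨heE, h1, h2⟩))
  · rintro ⟨h1, h2⟩
    exact ⟨h1, le_trans htt' h2⟩

/-- **Color count bound.** Starting from a uniform initial coloring, the number of distinct
refinement colors at any depth `d` is at most `1` plus the number of active temporal nodes
(nodes `(v,t)` with some incident edge at time `t`), which is at most `2E + 1`. -/
theorem color_count_le [Fintype V] [Fintype T] [DecidableEq T]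
    (E : Finset (V × V × T)) (d : ℕ) :
    ((Finset.univ : Finset (V × T)).image
        (fun p => refine E (fun _ _ => (() : Unit)) d p.1 p.2)).card
      ≤ (Finset.univ.filter
          (fun p : V × T => ∃ e ∈ E, e.2.2 = p.2 ∧ (e.1 = p.1 ∨ e.2.1 = p.1))).card + 1
    ∧ (Finset.univ.filter
          (fun p : V × T => ∃ e ∈ E, e.2.2 = p.2 ∧ (e.1 = p.1 ∨ e.2.1 = p.1))).card
      ≤ 2 * E.card := by
  classical
  set A := (Finset.univ.filter
      (fun p : V × T => ∃ e ∈ E, e.2.2 = p.2 ∧ (e.1 = p.1 ∨ e.2.1 = p.1))) with hA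
  constructor
  · have hsub : ((Finset.univ : Finset (V × T)).image
        (fun p => refine E (fun _ _ => (() : Unit)) d p.1 p.2))
        ⊆ insert (cEmpty d)
            (A.image (fun p => refine E (fun _ _ => (() : Unit)) d p.1 p.2)) := by
      intro c hc
      rcases Finset.mem_image.1 hc with ⟨p, _, hp⟩
      by_cases hemp : succF E p.1 p.2 = ∅
      · exact Finset.mem_insert.2 (Or.inl (hp ▸ refine_eq_cEmpty E d p.1 p.2 hemp))
      · obtain ⟨t', hact, heq⟩ := succF_eq_active E p.1 p.2 hemp
        refine Finset.mem_insert.2 (Or.inr (Finset.mem_image.2 ⟨(p.1, t'), ?_, ?_⟩))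
        · exact Finset.mem_filter.2 ⟨Finset.mem_univ _, hact⟩
        · exact hp ▸ (refine_eq_of_succF_eq E d p.1 p.1 p.2 t' heq).symm
    calc _ ≤ (insert (cEmpty d)
            (A.image (fun p => refine E (fun _ _ => (() : Unit)) d p.1 p.2))).card :=
          Finset.card_le_card hsub
      _ ≤ (A.image (fun p => refine E (fun _ _ => (() : Unit)) d p.1 p.2)).card + 1 :=
          Finset.card_insert_le _ _
      _ ≤ A.card + 1 := by
          exact Nat.add_le_add_right (Finset.card_image_le) 1
  · have hsub : A ⊆ E.image (fun e => (e.1, e.2.2)) ∪ E.image (fun e => (e.2.1, e.2.2)) := by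
      intro p hp
      rcases Finset.mem_filter.1 hp with ⟨_, e, heE, ht, hv⟩
      rcases hv with hv | hv
      · exact Finset.mem_union_left _ (Finset.mem_image.2 ⟨e, heE, by rw [hv, ht]⟩)
      · exact Finset.mem_union_right _ (Finset.mem_image.2 ⟨e, heE, by rw [hv, ht]⟩)
    calc A.card ≤ _ := Finset.card_le_card hsub
      _ ≤ (E.image (fun e => (e.1, e.2.2))).card + (E.image (fun e => (e.2.1, e.2.2))).card :=
          Finset.card_union_le _ _
      _ ≤ E.card + E.card := Nat.add_le_add Finset.card_image_le Finset.card_image_le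
      _ = 2 * E.card := (Nat.two_mul _).symm
end

section
/- An in-time color-respecting swap preserves the multiset of successor colors of every temporal node: if edges ({x,y},t) and ({r,s},t) with c(x,t)=c(r,t), c(y,t)=c(s,t), x≠s, r≠y, and ({x,s},t), ({r,y},t) ∉ E are replaced by ({x,s},t) and ({r,y},t), then for every temporal node (v,t'), the multiset {c(w,t̂) : (w,t̂) ∈ S(v,t')} is unchanged. -/
variable {V T C : Type} [DecidableEq V] [LinearOrder T]

/-- Multiset of colors of the causal successors of `(v,t)`. -/
def succColors (E : Finset (V × V × T)) (c : V → T → C) (v : V) (t : T) : Multiset C :=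
  (succF E v t).val.map (fun p => c p.1 p.2)

/-- Result of the in-time swap replacing `({x,y},t), ({r,s},t)` by `({x,s},t), ({r,y},t)`
(in the symmetric directed representation). -/
def swapE (E : Finset (V × V × T)) (x y r s : V) (t : T) : Finset (V × V × T) :=
  (E \ ({(x,y,t), (y,x,t), (r,s,t), (s,r,t)} : Finset (V × V × T)))
    ∪ ({(x,s,t), (s,x,t), (r,y,t), (y,r,t)} : Finset (V × V × T))

lemma succColors_eq_map (E : Finset (V × V × T)) (c : V → T → C) (v : V) (t' : T) :
    succColors E c v t' =
      Multiset.map (fun e : V × V × T => c e.2.1 e.2.2)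
        (Multiset.filter (fun e => e.1 = v ∧ t' ≤ e.2.2) E.val) := by
  unfold succColors succF
  have hinj : Set.InjOn (fun e : V × V × T => e.2)
      (E.filter (fun e => e.1 = v ∧ t' ≤ e.2.2)) := by
    intro e1 h1 e2 h2 h12
    simp only [Finset.coe_filter, Set.mem_setOf_eq] at h1 h2
    have : e1.1 = e2.1 := by rw [h1.2.1, h2.2.1]
    exact Prod.ext this h12
  rw [Finset.image_val_of_injOn hinj, Multiset.map_map, Finset.filter_val]
  rfl

/-- **Swaps preserve successor color multisets.** An in-time color-respecting swap of edges
`({x,y},t)` and `({r,s},t)` into `({x,s},t)` and `({r,y},t)` leaves the multiset of successor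
colors of every temporal node unchanged. -/
theorem swap_preserves_succ_colors (E : Finset (V × V × T)) (c : V → T → C)
    (hsymm : ∀ u w t', (u,w,t') ∈ E → (w,u,t') ∈ E)
    (hloop : ∀ u t', (u,u,t') ∉ E)
    (x y r s : V) (t : T)
    (hxy : (x,y,t) ∈ E) (hrs : (r,s,t) ∈ E)
    (hcx : c x t = c r t) (hcy : c y t = c s t)
    (hxs : x ≠ s) (hry : r ≠ y)
    (hnew1 : (x,s,t) ∉ E) (hnew2 : (r,y,t) ∉ E) :
    ∀ v t', succColors (swapE E x y r s t) c v t' = succColors E c v t' := by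
  -- derived disequalities: x,y,r,s are pairwise distinct
  have hxy' : x ≠ y := fun h => hloop y t (h ▸ hxy)
  have hrs' : r ≠ s := fun h => hloop s t (h ▸ hrs)
  have hsy : s ≠ y := fun h => hnew1 (by rwa [h])
  have hxr : x ≠ r := fun h => hnew2 (by rwa [← h])
  have hnew1' : (s,x,t) ∉ E := fun h => hnew1 (hsymm _ _ _ h)
  have hnew2' : (y,r,t) ∉ E := fun h => hnew2 (hsymm _ _ _ h)
  have hyx : (y,x,t) ∈ E := hsymm _ _ _ hxy
  have hsr : (s,r,t) ∈ E := hsymm _ _ _ hrs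
  intro v t'
  have hDval : ({(x,y,t), (y,x,t), (r,s,t), (s,r,t)} : Finset (V × V × T)).val =
      ({(x,y,t), (y,x,t), (r,s,t), (s,r,t)} : Multiset (V × V × T)) := by
    rw [Finset.insert_val_of_notMem, Finset.insert_val_of_notMem,
      Finset.insert_val_of_notMem] <;>
      simp [Prod.ext_iff, hxy', hrs', hsy, hxr, hry, hxs, hxy'.symm, hrs'.symm,
        hsy.symm, hxr.symm, hry.symm, hxs.symm]
  have hAval : ({(x,s,t), (s,x,t), (r,y,t), (y,r,t)} : Finset (V × V × T)).val =
      ({(x,s,t), (s,x,t), (r,y,t), (y,r,t)} : Multiset (V × V × T)) := by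
    rw [Finset.insert_val_of_notMem, Finset.insert_val_of_notMem,
      Finset.insert_val_of_notMem] <;>
      simp [Prod.ext_iff, hxy', hrs', hsy, hxr, hry, hxs, hxy'.symm, hrs'.symm,
        hsy.symm, hxr.symm, hry.symm, hxs.symm]
  have hdisj : Disjoint
      (E \ ({(x,y,t), (y,x,t), (r,s,t), (s,r,t)} : Finset (V × V × T)))
      ({(x,s,t), (s,x,t), (r,y,t), (y,r,t)} : Finset (V × V × T)) := by
    rw [Finset.disjoint_right]
    intro a ha
    simp only [Finset.mem_insert, Finset.mem_singleton] at ha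
    rw [Finset.mem_sdiff]
    rintro ⟨haE, -⟩
    rcases ha with h | h | h | h <;> subst h <;>
      first | exact hnew1 haE | exact hnew1' haE | exact hnew2 haE | exact hnew2' haE
  have hval : (swapE E x y r s t).val =
      (E.val - ({(x,y,t), (y,x,t), (r,s,t), (s,r,t)} : Multiset (V × V × T)))
        + ({(x,s,t), (s,x,t), (r,y,t), (y,r,t)} : Multiset (V × V × T)) := by
    rw [swapE, ← Finset.disjUnion_eq_union _ _ hdisj]
    show (_ : Multiset _) + _ = _
    rw [Finset.sdiff_val, hDval, hAval]
  have hDle : ({(x,y,t), (y,x,t), (r,s,t), (s,r,t)} : Multiset (V × V × T)) ≤ E.val := by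
    rw [← hDval]
    exact Finset.val_le_iff.mpr (by
      intro a ha
      simp only [Finset.mem_insert, Finset.mem_singleton] at ha
      rcases ha with h | h | h | h <;> subst h <;> assumption)
  have hfle : Multiset.filter (fun e => e.1 = v ∧ t' ≤ e.2.2)
        ({(x,y,t), (y,x,t), (r,s,t), (s,r,t)} : Multiset (V × V × T)) ≤
      Multiset.filter (fun e => e.1 = v ∧ t' ≤ e.2.2) E.val :=
    Multiset.filter_le_filter _ hDle
  obtain ⟨k, hk⟩ := Multiset.le_iff_exists_add.mp hfle
  -- the key local computation
  have hkey : Multiset.map (fun e : V × V × T => c e.2.1 e.2.2)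
        (Multiset.filter (fun e => e.1 = v ∧ t' ≤ e.2.2)
          ({(x,y,t), (y,x,t), (r,s,t), (s,r,t)} : Multiset (V × V × T))) =
      Multiset.map (fun e : V × V × T => c e.2.1 e.2.2)
        (Multiset.filter (fun e => e.1 = v ∧ t' ≤ e.2.2)
          ({(x,s,t), (s,x,t), (r,y,t), (y,r,t)} : Multiset (V × V × T))) := by
    by_cases htt : t' ≤ t
    · by_cases h1 : x = v
      · have h2 : ¬ y = v := fun h => hxy' (h1.trans h.symm)
        have h3 : ¬ r = v := fun h => hxr (h1.trans h.symm)
        have h4 : ¬ s = v := fun h => hxs (h1.trans h.symm)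
        simp [Multiset.filter_cons, Multiset.filter_singleton, htt, h1, h2, h3, h4, hcy]
      · by_cases h2 : y = v
        · have h3 : ¬ r = v := fun h => hry (h.trans h2.symm)
          have h4 : ¬ s = v := fun h => hsy (h.trans h2.symm)
          simp [Multiset.filter_cons, Multiset.filter_singleton, htt, h1, h2, h3, h4, hcx]
        · by_cases h3 : r = v
          · have h4 : ¬ s = v := fun h => hrs' (h3.trans h.symm)
            simp [Multiset.filter_cons, Multiset.filter_singleton, htt, h1, h2, h3, h4, hcy]
          · by_cases h4 : s = v
            · simp [Multiset.filter_cons, Multiset.filter_singleton, htt, h1, h2, h3, h4, hcx]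
            · simp [Multiset.filter_cons, Multiset.filter_singleton, htt, h1, h2, h3, h4]
    · simp [Multiset.filter_cons, Multiset.filter_singleton, htt]
  rw [succColors_eq_map, succColors_eq_map, hval, Multiset.filter_add, Multiset.filter_sub,
    hk, add_tsub_cancel_left, Multiset.map_add, Multiset.map_add, ← hkey, add_comm]
end

section
/- Two temporal nodes have equal refinement colors at depth d (from uniform initial colors) if and only if their depth-d causal trees are isomorphic as rooted trees. -/
variable {V T C0 : Type} [DecidableEq V] [LinearOrder T]

/-- Causal successors as a function on temporal nodes. -/
def Sc (E : Finset (V × V × T)) (p : V × T) : Finset (V × T) := succF E p.1 p.2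

/-- Nodes of the depth-`d` causal tree rooted at `p`. -/
def TV (S : (V × T) → Finset (V × T)) : ℕ → (V × T) → Finset (List (V × T))
  | 0, p => {[p]}
  | d+1, p => {[p]} ∪ (S p).biUnion (fun u => (TV S d u).image (fun x => p :: x))

/-- Edges of the depth-`d` causal tree rooted at `p`. -/
def TE (S : (V × T) → Finset (V × T)) : ℕ → (V × T) → Finset (List (V × T) × List (V × T))
  | 0, _ => ∅
  | d+1, p => (S p).biUnion (fun u =>
      ((TE S d u).image (fun q => (p :: q.1, p :: q.2))) ∪ {([p], [p, u])})

section TreeLemmas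
variable {V T : Type} [DecidableEq V] [LinearOrder T]
variable {S : (V × T) → Finset (V × T)}

lemma mem_TV_zero {p : V × T} {x : List (V × T)} : x ∈ TV S 0 p ↔ x = [p] := by
  simp [TV]

lemma mem_TV_succ {d : ℕ} {p : V × T} {x : List (V × T)} :
    x ∈ TV S (d+1) p ↔ x = [p] ∨ ∃ u ∈ S p, ∃ y ∈ TV S d u, x = p :: y := by
  simp [TV, eq_comm]

lemma root_mem_TV {d : ℕ} {p : V × T} : [p] ∈ TV S d p := by
  cases d <;> simp [TV]

lemma exists_cons_of_mem_TV {d : ℕ} {p : V × T} {x : List (V × T)}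
    (h : x ∈ TV S d p) : ∃ y, x = p :: y := by
  cases d with
  | zero => exact ⟨[], mem_TV_zero.1 h⟩
  | succ d =>
    rcases mem_TV_succ.1 h with h | ⟨u, _, y, _, h⟩
    · exact ⟨[], h⟩
    · exact ⟨y, h⟩

lemma TE_zero {p : V × T} {e : List (V × T) × List (V × T)} : e ∉ TE S 0 p := by
  simp [TE]

lemma mem_TE_succ {d : ℕ} {p : V × T} {a b : List (V × T)} :
    (a, b) ∈ TE S (d+1) p ↔ ∃ u ∈ S p,
      ((∃ a' b', (a', b') ∈ TE S d u ∧ a = p :: a' ∧ b = p :: b') ∨ (a = [p] ∧ b = [p, u])) := by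
  simp only [TE, Finset.mem_biUnion, Finset.mem_union, Finset.mem_image, Finset.mem_singleton,
    Prod.mk.injEq, Prod.ext_iff]
  constructor
  · rintro ⟨u, hu, ⟨⟨a', b'⟩, he, h1, h2⟩ | ⟨h1, h2⟩⟩
    · exact ⟨u, hu, Or.inl ⟨a', b', he, h1.symm, h2.symm⟩⟩
    · exact ⟨u, hu, Or.inr ⟨h1, h2⟩⟩
  · rintro ⟨u, hu, ⟨a', b', he, h1, h2⟩ | ⟨h1, h2⟩⟩
    · exact ⟨u, hu, Or.inl ⟨⟨a', b'⟩, he, h1.symm, h2.symm⟩⟩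
    · exact ⟨u, hu, Or.inr ⟨h1, h2⟩⟩

end TreeLemmas
section TreeLemmas2
variable {V T : Type} [DecidableEq V] [LinearOrder T]
variable {S : (V × T) → Finset (V × T)}

lemma head_eq_of_mem_TV {d : ℕ} {p p' : V × T} {x : List (V × T)}
    (h : x ∈ TV S d p) (h' : x ∈ TV S d p') : p = p' := by
  obtain ⟨y, rfl⟩ := exists_cons_of_mem_TV h
  obtain ⟨y', hy'⟩ := exists_cons_of_mem_TV h'
  exact (List.cons.injEq _ _ _ _ ▸ hy').1

lemma mem_TV_of_mem_TE {d : ℕ} {p : V × T} {a b : List (V × T)}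
    (h : (a, b) ∈ TE S d p) : a ∈ TV S d p ∧ b ∈ TV S d p := by
  induction d generalizing p a b with
  | zero => exact absurd h TE_zero
  | succ d ih =>
    rcases mem_TE_succ.1 h with ⟨u, hu, ⟨a', b', he, rfl, rfl⟩ | ⟨rfl, rfl⟩⟩
    · obtain ⟨ha, hb⟩ := ih he
      exact ⟨mem_TV_succ.2 (Or.inr ⟨u, hu, a', ha, rfl⟩),
             mem_TV_succ.2 (Or.inr ⟨u, hu, b', hb, rfl⟩)⟩
    · exact ⟨root_mem_TV, mem_TV_succ.2 (Or.inr ⟨u, hu, [u], root_mem_TV, rfl⟩)⟩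

lemma TE_from_root {d : ℕ} {p : V × T} {b : List (V × T)}
    (h : ([p], b) ∈ TE S (d+1) p) : ∃ u ∈ S p, b = [p, u] := by
  rcases mem_TE_succ.1 h with ⟨u, hu, ⟨a', b', he, ha, _⟩ | ⟨_, rfl⟩⟩
  · obtain ⟨y, rfl⟩ := exists_cons_of_mem_TV (mem_TV_of_mem_TE he).1
    simp at ha
  · exact ⟨u, hu, rfl⟩

lemma exists_parent {d : ℕ} {p : V × T} {x : List (V × T)} (h : x ∈ TV S d p) :
    x = [p] ∨ ∃ y, y ∈ TV S d p ∧ (y, x) ∈ TE S d p ∧ y.length + 1 = x.length := by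
  induction d generalizing p x with
  | zero => exact Or.inl (mem_TV_zero.1 h)
  | succ d ih =>
    rcases mem_TV_succ.1 h with h | ⟨u, hu, y, hy, rfl⟩
    · exact Or.inl h
    · rcases ih hy with rfl | ⟨z, hz, hzy, hlen⟩
      · refine Or.inr ⟨[p], root_mem_TV, ?_, rfl⟩
        exact mem_TE_succ.2 ⟨u, hu, Or.inr ⟨rfl, rfl⟩⟩
      · refine Or.inr ⟨p :: z, mem_TV_succ.2 (Or.inr ⟨u, hu, z, hz, rfl⟩),
          mem_TE_succ.2 ⟨u, hu, Or.inl ⟨z, y, hzy, rfl, rfl⟩⟩, by simp [← hlen]⟩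

/-- If an edge starts in the subtree hanging below child `w`, it stays there. -/
lemma edge_step {d : ℕ} {q w : V × T} {a b : List (V × T)}
    (h : (a, b) ∈ TE S (d+1) q) (ha : ∃ a' ∈ TV S d w, a = q :: a') :
    ∃ b' ∈ TV S d w, b = q :: b' := by
  obtain ⟨a', ha', rfl⟩ := ha
  rcases mem_TE_succ.1 h with ⟨u, hu, ⟨a'', b'', he, haa, rfl⟩ | ⟨haa, _⟩⟩
  · have : a'' = a' := by simpa using haa.symm
    subst this
    have : u = w := head_eq_of_mem_TV (mem_TV_of_mem_TE he).1 ha'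
    subst this
    exact ⟨b'', (mem_TV_of_mem_TE he).2, rfl⟩
  · obtain ⟨y, rfl⟩ := exists_cons_of_mem_TV ha'
    simp at haa

/-- Internal edges characterization. -/
lemma cons_mem_TE_succ {d : ℕ} {q w : V × T} {a b : List (V × T)}
    (ha : a ∈ TV S d w) (hw : w ∈ S q) :
    ((q :: a, q :: b) ∈ TE S (d+1) q) ↔ (a, b) ∈ TE S d w := by
  constructor
  · intro h
    rcases mem_TE_succ.1 h with ⟨u, hu, ⟨a', b', he, haa, hbb⟩ | ⟨haa, _⟩⟩
    · have h1 : a' = a := by simpa using haa.symm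
      have h2 : b' = b := by simpa using hbb.symm
      subst h1; subst h2
      have : u = w := head_eq_of_mem_TV (mem_TV_of_mem_TE he).1 ha
      exact this ▸ he
    · obtain ⟨y, rfl⟩ := exists_cons_of_mem_TV ha
      simp at haa
  · intro h
    exact mem_TE_succ.2 ⟨w, hw, Or.inl ⟨a, b, h, rfl, rfl⟩⟩

end TreeLemmas2
section BijLemmas
variable {α β : Type} [DecidableEq α] [DecidableEq β]

lemma exists_bijOn_of_map_eq (f : α → β) :
    ∀ n (s t : Finset α), s.card = n → s.val.map f = t.val.map f →
    ∃ g : α → α, Set.BijOn g ↑s ↑t ∧ ∀ a ∈ s, f (g a) = f a := by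
  intro n
  induction n with
  | zero =>
    intro s t hs hmap
    have hs0 : s = ∅ := Finset.card_eq_zero.1 hs
    subst hs0
    have : t.val.map f = 0 := by simpa using hmap.symm
    have ht0 : t = ∅ := by
      have := Multiset.eq_zero_of_forall_notMem (s := t.val) ?_
      · exact Finset.val_eq_zero.1 this
      · intro x hx
        exact absurd (Multiset.mem_map_of_mem f hx) (by simp [this])
    subst ht0
    exact ⟨id, ⟨fun x hx => by simpa using hx, fun x hx => by simp at hx,
      fun x hx => by simp at hx⟩, fun a ha => by simp at ha⟩
  | succ n ih =>
    intro s t hs hmap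
    obtain ⟨a, ha⟩ : s.Nonempty := Finset.card_pos.1 (by omega)
    have hfa : f a ∈ t.val.map f := by
      rw [← hmap]; exact Multiset.mem_map_of_mem f ha
    obtain ⟨b, hb, hfb⟩ := Multiset.mem_map.1 hfa
    have hb : b ∈ t := hb
    -- peel off a from s and b from t
    have hsval : s.val = a ::ₘ (s.erase a).val := by
      rw [Finset.erase_val]; exact (Multiset.cons_erase ha).symm
    have htval : t.val = b ::ₘ (t.erase b).val := by
      rw [Finset.erase_val]; exact (Multiset.cons_erase hb).symm
    have hmap' : (s.erase a).val.map f = (t.erase b).val.map f := by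
      have : f a ::ₘ (s.erase a).val.map f = f a ::ₘ (t.erase b).val.map f := by
        have h2 := hmap
        rw [hsval, htval, Multiset.map_cons, Multiset.map_cons, hfb] at h2
        exact h2
      exact (Multiset.cons_inj_right _).1 this
    obtain ⟨g0, hg0, hg0f⟩ := ih (s.erase a) (t.erase b)
      (by rw [Finset.card_erase_of_mem ha, hs]; rfl) hmap'
    refine ⟨fun x => if x = a then b else g0 x, ⟨?_, ?_, ?_⟩, ?_⟩
    · intro x hx
      by_cases hxa : x = a
      · simpa [hxa] using hb
      · have hx' : x ∈ s.erase a := Finset.mem_erase.2 ⟨hxa, hx⟩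
        have := hg0.1 hx'
        simp only [Finset.mem_coe, Finset.mem_erase] at this
        simpa [hxa] using this.2
    · intro x hx y hy hxy
      simp only [Finset.mem_coe] at hx hy
      by_cases hxa : x = a <;> by_cases hya : y = a
      · rw [hxa, hya]
      · exfalso
        have hy' : y ∈ s.erase a := Finset.mem_erase.2 ⟨hya, hy⟩
        have : g0 y ∈ t.erase b := hg0.1 hy'
        simp only [hxa, hya, if_pos rfl, if_neg hya] at hxy
        exact (Finset.mem_erase.1 this).1 hxy.symm
      · exfalso
        have hx' : x ∈ s.erase a := Finset.mem_erase.2 ⟨hxa, hx⟩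
        have : g0 x ∈ t.erase b := hg0.1 hx'
        simp only [hxa, hya, if_neg hxa, if_pos rfl] at hxy
        exact (Finset.mem_erase.1 this).1 hxy
      · simp only [if_neg hxa, if_neg hya] at hxy
        exact hg0.2.1 (Finset.mem_erase.2 ⟨hxa, hx⟩) (Finset.mem_erase.2 ⟨hya, hy⟩) hxy
    · intro y hy
      simp only [Finset.mem_coe] at hy
      by_cases hyb : y = b
      · exact ⟨a, ha, by simp [hyb]⟩
      · obtain ⟨x, hx, hgx⟩ := hg0.2.2 (Finset.mem_coe.2 (Finset.mem_erase.2 ⟨hyb, hy⟩))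
        have hx' := Finset.mem_erase.1 (Finset.mem_coe.1 hx)
        exact ⟨x, hx'.2, by simpa [hx'.1] using hgx⟩
    · intro x hx
      by_cases hxa : x = a
      · simp [hxa, ← hfb]
      · simp only [if_neg hxa]
        exact hg0f x (Finset.mem_erase.2 ⟨hxa, hx⟩)

lemma map_eq_of_bijOn (f : α → β) (s t : Finset α) (g : α → α)
    (hg : Set.BijOn g ↑s ↑t) (hgf : ∀ a ∈ s, f (g a) = f a) :
    s.val.map f = t.val.map f := by
  have himg : s.image g = t := by
    apply Finset.ext
    intro y
    simp only [Finset.mem_image]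
    constructor
    · rintro ⟨x, hx, rfl⟩; exact hg.1 hx
    · intro hy
      obtain ⟨x, hx, hgx⟩ := hg.2.2 (Finset.mem_coe.2 hy)
      exact ⟨x, Finset.mem_coe.1 hx, hgx⟩
  have hval : s.val.map g = t.val := by
    rw [← himg]
    exact (Finset.image_val_of_injOn (by exact_mod_cast hg.2.1)).symm
  calc s.val.map f = s.val.map (f ∘ g) := by
        apply Multiset.map_congr rfl
        intro x hx
        exact (hgf x hx).symm
    _ = (s.val.map g).map f := by rw [Multiset.map_map]
    _ = t.val.map f := by rw [hval]

end BijLemmas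
section IsoLemmas
variable {V T : Type} [DecidableEq V] [LinearOrder T]
variable {S : (V × T) → Finset (V × T)}

def IsoAt (S : (V × T) → Finset (V × T)) (d : ℕ) (p q : V × T) : Prop :=
  ∃ f : List (V × T) → List (V × T),
    Set.BijOn f (↑(TV S d p)) (↑(TV S d q)) ∧
    f [p] = [q] ∧
    ∀ a b, a ∈ TV S d p → b ∈ TV S d p →
      ((a, b) ∈ TE S d p ↔ (f a, f b) ∈ TE S d q)

lemma isoAt_zero (p q : V × T) : IsoAt S 0 p q := by
  refine ⟨fun _ => [q], ⟨?_, ?_, ?_⟩, rfl, ?_⟩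
  · intro x hx; simp [TV]
  · intro x hx y hy _
    have hx' : x = [p] := by simpa [TV] using hx
    have hy' : y = [p] := by simpa [TV] using hy
    rw [hx', hy']
  · intro y hy
    have hy' : y = [q] := by simpa [TV] using hy
    exact ⟨[p], by simp [TV], hy'.symm⟩
  · intro a b _ _
    simp [TE]

lemma isoAt_succ_of {d : ℕ} {p q : V × T} (g : (V × T) → (V × T))
    (hg : Set.BijOn g ↑(S p) ↑(S q)) (h : ∀ u ∈ S p, IsoAt S d u (g u)) :
    IsoAt S (d+1) p q := by
  classical
  have h' : ∀ u : V × T, ∃ f : List (V × T) → List (V × T),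
      u ∈ S p → (Set.BijOn f ↑(TV S d u) ↑(TV S d (g u)) ∧ f [u] = [g u] ∧
        ∀ a b, a ∈ TV S d u → b ∈ TV S d u →
          ((a, b) ∈ TE S d u ↔ (f a, f b) ∈ TE S d (g u))) := by
    intro u
    by_cases hu : u ∈ S p
    · obtain ⟨f, hf⟩ := h u hu; exact ⟨f, fun _ => hf⟩
    · exact ⟨id, fun hu' => absurd hu' hu⟩
  choose fc hfc using h'
  set F : List (V × T) → List (V × T) := fun l =>
    match l with
    | [] => []
    | [_] => [q]
    | _ :: u :: rest => q :: fc u (u :: rest) with hF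
  have hFroot : F [p] = [q] := rfl
  have hFcons : ∀ u, ∀ x, x ∈ TV S d u → F (p :: x) = q :: fc u x := by
    intro u x hx
    obtain ⟨y, rfl⟩ := exists_cons_of_mem_TV hx
    rfl
  have hmemc : ∀ u, u ∈ S p → ∀ x, x ∈ TV S d u → fc u x ∈ TV S d (g u) := by
    intro u hu x hx
    exact (hfc u hu).1.1 hx
  have hgu : ∀ u, u ∈ S p → g u ∈ S q := fun u hu => hg.1 hu
  refine ⟨F, ⟨?_, ?_, ?_⟩, hFroot, ?_⟩
  · -- MapsTo
    intro x hx
    rcases mem_TV_succ.1 hx with rfl | ⟨u, hu, y, hy, rfl⟩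
    · rw [hFroot]; exact root_mem_TV
    · rw [hFcons u y hy]
      exact mem_TV_succ.2 (Or.inr ⟨g u, hgu u hu, fc u y, hmemc u hu y hy, rfl⟩)
  · -- InjOn
    intro a ha b hb hab
    rcases mem_TV_succ.1 ha with rfl | ⟨u, hu, y, hy, rfl⟩ <;>
      rcases mem_TV_succ.1 hb with rfl | ⟨u', hu', z, hz, rfl⟩
    · rfl
    · rw [hFroot, hFcons u' z hz] at hab
      obtain ⟨w, hw⟩ := exists_cons_of_mem_TV (hmemc u' hu' z hz)
      rw [hw] at hab
      simp at hab
    · rw [hFroot, hFcons u y hy] at hab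
      obtain ⟨w, hw⟩ := exists_cons_of_mem_TV (hmemc u hu y hy)
      rw [hw] at hab
      simp at hab
    · rw [hFcons u y hy, hFcons u' z hz] at hab
      have heq : fc u y = fc u' z := by simpa using hab
      have hguu : g u = g u' :=
        head_eq_of_mem_TV (heq ▸ hmemc u hu y hy) (hmemc u' hu' z hz)
      have huu : u = u' := hg.2.1 hu hu' hguu
      subst huu
      have : y = z := (hfc u hu).1.2.1 hy hz heq
      rw [this]
  · -- SurjOn
    intro b hb
    rcases mem_TV_succ.1 hb with rfl | ⟨w, hw, z, hz, rfl⟩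
    · exact ⟨[p], root_mem_TV, hFroot⟩
    · obtain ⟨u, hu, hguw⟩ := hg.2.2 hw
      subst hguw
      obtain ⟨x, hx, hfx⟩ := (hfc u hu).1.2.2 hz
      refine ⟨p :: x, mem_TV_succ.2 (Or.inr ⟨u, hu, x, hx, rfl⟩), ?_⟩
      rw [hFcons u x hx, hfx]
  · -- edges
    intro a b ha hb
    constructor
    · intro hab
      rcases mem_TE_succ.1 hab with ⟨u, hu, ⟨a', b', he, rfl, rfl⟩ | ⟨rfl, rfl⟩⟩
      · obtain ⟨ha', hb'⟩ := mem_TV_of_mem_TE he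
        rw [hFcons u a' ha', hFcons u b' hb']
        exact (cons_mem_TE_succ (hmemc u hu a' ha') (hgu u hu)).2
          (((hfc u hu).2.2 a' b' ha' hb').1 he)
      · rw [hFroot, show ([p, u] : List (V × T)) = p :: [u] from rfl,
          hFcons u [u] root_mem_TV, (hfc u hu).2.1]
        exact mem_TE_succ.2 ⟨g u, hgu u hu, Or.inr ⟨rfl, rfl⟩⟩
    · intro hab
      rcases mem_TV_succ.1 ha with rfl | ⟨u, hu, x, hx, rfl⟩
      · -- a = [p]
        rw [hFroot] at hab
        obtain ⟨w, hw, hFb⟩ := TE_from_root hab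
        rcases mem_TV_succ.1 hb with rfl | ⟨u, hu, y, hy, rfl⟩
        · rw [hFroot] at hFb; simp at hFb
        · rw [hFcons u y hy] at hFb
          have h1 : fc u y = [w] := by simpa using hFb
          have h2 : w = g u := by
            obtain ⟨z, hz⟩ := exists_cons_of_mem_TV (h1 ▸ hmemc u hu y hy)
            simpa using congrArg (List.head?) hz
          have h3 : y = [u] := (hfc u hu).1.2.1 hy root_mem_TV
            (by rw [h1, h2, (hfc u hu).2.1])
          rw [h3]
          exact mem_TE_succ.2 ⟨u, hu, Or.inr ⟨rfl, rfl⟩⟩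
      · -- a = p :: x
        rw [hFcons u x hx] at hab
        obtain ⟨b'', hb'', hFb⟩ := edge_step hab ⟨fc u x, hmemc u hu x hx, rfl⟩
        rcases mem_TV_succ.1 hb with rfl | ⟨u₂, hu₂, y, hy, rfl⟩
        · rw [hFroot] at hFb
          obtain ⟨z, rfl⟩ := exists_cons_of_mem_TV hb''
          simp at hFb
        · rw [hFcons u₂ y hy] at hFb
          have h1 : fc u₂ y = b'' := by simpa using hFb
          have hguu : g u₂ = g u := head_eq_of_mem_TV (h1 ▸ hmemc u₂ hu₂ y hy) hb''
          have huu : u₂ = u := hg.2.1 hu₂ hu hguu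
          subst huu
          rw [hFcons u₂ y hy] at hab
          have hedge : (fc u₂ x, fc u₂ y) ∈ TE S d (g u₂) :=
            (cons_mem_TE_succ (hmemc u₂ hu₂ x hx) (hgu u₂ hu₂)).1 hab
          have : (x, y) ∈ TE S d u₂ := ((hfc u₂ hu₂).2.2 x y hx hy).2 hedge
          exact (cons_mem_TE_succ hx hu₂).2 this

end IsoLemmas
section IsoDecomp
variable {V T : Type} [DecidableEq V] [LinearOrder T]
variable {S : (V × T) → Finset (V × T)}

lemma isoAt_succ_to {d : ℕ} {p q : V × T} (h : IsoAt S (d+1) p q) :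
    ∃ g : (V × T) → (V × T),
      Set.BijOn g ↑(S p) ↑(S q) ∧ ∀ u ∈ S p, IsoAt S d u (g u) := by
  classical
  obtain ⟨F, hF, hFroot, hFE⟩ := h
  set g : (V × T) → (V × T) := fun u => (F [p, u]).getD 1 u with hgdef
  have hconsmem : ∀ u ∈ S p, ∀ x ∈ TV S d u, p :: x ∈ TV S (d+1) p :=
    fun u hu x hx => mem_TV_succ.2 (Or.inr ⟨u, hu, x, hx, rfl⟩)
  have hchild : ∀ u ∈ S p, [p, u] ∈ TV S (d+1) p :=
    fun u hu => hconsmem u hu [u] root_mem_TV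
  have hstep1 : ∀ u ∈ S p, F [p, u] = [q, g u] ∧ g u ∈ S q := by
    intro u hu
    have h1 : ([p], [p, u]) ∈ TE S (d+1) p := mem_TE_succ.2 ⟨u, hu, Or.inr ⟨rfl, rfl⟩⟩
    have h2 := (hFE [p] [p, u] root_mem_TV (hchild u hu)).1 h1
    rw [hFroot] at h2
    obtain ⟨w, hw, hFw⟩ := TE_from_root h2
    have : g u = w := by rw [hgdef]; simp [hFw, List.getD]
    exact ⟨by rw [hFw, this], this ▸ hw⟩
  have hsub : ∀ n, ∀ u ∈ S p, ∀ x ∈ TV S d u, x.length ≤ n →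
      ∃ x' ∈ TV S d (g u), F (p :: x) = q :: x' := by
    intro n
    induction n with
    | zero =>
      intro u hu x hx hlen
      obtain ⟨y, rfl⟩ := exists_cons_of_mem_TV hx
      simp at hlen
    | succ n ih =>
      intro u hu x hx hlen
      rcases exists_parent hx with rfl | ⟨y, hy, hyx, hylen⟩
      · exact ⟨[g u], root_mem_TV, (hstep1 u hu).1⟩
      · obtain ⟨y', hy', hFy⟩ := ih u hu y hy (by omega)
        have hedge : (p :: y, p :: x) ∈ TE S (d+1) p := (cons_mem_TE_succ hy hu).2 hyx
        have h2 := (hFE (p :: y) (p :: x) (hconsmem u hu y hy) (hconsmem u hu x hx)).1 hedge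
        rw [hFy] at h2
        exact edge_step h2 ⟨y', hy', rfl⟩
  have hsub' : ∀ u ∈ S p, ∀ x ∈ TV S d u,
      ∃ x' ∈ TV S d (g u), F (p :: x) = q :: x' :=
    fun u hu x hx => hsub x.length u hu x hx le_rfl
  have hginj : ∀ u ∈ S p, ∀ u' ∈ S p, g u = g u' → u = u' := by
    intro u hu u' hu' hguu
    have h1 := (hstep1 u hu).1
    have h2 := (hstep1 u' hu').1
    have : F [p, u] = F [p, u'] := by rw [h1, h2, hguu]
    have := hF.2.1 (Finset.mem_coe.2 (hchild u hu)) (Finset.mem_coe.2 (hchild u' hu')) this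
    simpa using this
  refine ⟨g, ⟨?_, ?_, ?_⟩, ?_⟩
  · intro u hu
    exact Finset.mem_coe.2 (hstep1 u (Finset.mem_coe.1 hu)).2
  · intro u hu u' hu' hguu
    exact hginj u (Finset.mem_coe.1 hu) u' (Finset.mem_coe.1 hu') hguu
  · intro w hw
    have hw' : w ∈ S q := Finset.mem_coe.1 hw
    have hmemw : [q, w] ∈ TV S (d+1) q :=
      mem_TV_succ.2 (Or.inr ⟨w, hw', [w], root_mem_TV, rfl⟩)
    obtain ⟨a, ha, hFa⟩ := hF.2.2 (Finset.mem_coe.2 hmemw)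
    have ha' : a ∈ TV S (d+1) p := Finset.mem_coe.1 ha
    have hedge : ([p], a) ∈ TE S (d+1) p := by
      refine (hFE [p] a root_mem_TV ha').2 ?_
      rw [hFroot, hFa]
      exact mem_TE_succ.2 ⟨w, hw', Or.inr ⟨rfl, rfl⟩⟩
    obtain ⟨u, hu, rfl⟩ := TE_from_root hedge
    refine ⟨u, Finset.mem_coe.2 hu, ?_⟩
    have := (hstep1 u hu).1
    rw [hFa] at this
    simpa using this.symm
  · intro u hu
    refine ⟨fun x => (F (p :: x)).tail, ⟨?_, ?_, ?_⟩, ?_, ?_⟩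
    · intro x hx
      obtain ⟨x', hx', hFx⟩ := hsub' u hu x (Finset.mem_coe.1 hx)
      show (F (p :: x)).tail ∈ ↑(TV S d (g u))
      rw [hFx]
      exact Finset.mem_coe.2 hx'
    · intro x hx y hy hxy
      obtain ⟨x', hx', hFx⟩ := hsub' u hu x (Finset.mem_coe.1 hx)
      obtain ⟨y', hy', hFy⟩ := hsub' u hu y (Finset.mem_coe.1 hy)
      change (F (p :: x)).tail = (F (p :: y)).tail at hxy
      rw [hFx, hFy] at hxy
      simp only [List.tail_cons] at hxy
      have : F (p :: x) = F (p :: y) := by rw [hFx, hFy, hxy]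
      have := hF.2.1
        (Finset.mem_coe.2 (hconsmem u hu x (Finset.mem_coe.1 hx)))
        (Finset.mem_coe.2 (hconsmem u hu y (Finset.mem_coe.1 hy))) this
      simpa using this
    · intro b hb
      have hb' : b ∈ TV S d (g u) := Finset.mem_coe.1 hb
      have hmemb : q :: b ∈ TV S (d+1) q :=
        mem_TV_succ.2 (Or.inr ⟨g u, (hstep1 u hu).2, b, hb', rfl⟩)
      obtain ⟨a, ha, hFa⟩ := hF.2.2 (Finset.mem_coe.2 hmemb)
      rcases mem_TV_succ.1 (Finset.mem_coe.1 ha) with rfl | ⟨u₂, hu₂, x, hx, rfl⟩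
      · rw [hFroot] at hFa
        obtain ⟨z, rfl⟩ := exists_cons_of_mem_TV hb'
        simp at hFa
      · obtain ⟨x', hx', hFx⟩ := hsub' u₂ hu₂ x hx
        rw [hFx] at hFa
        have hx'b : x' = b := by simpa using hFa
        have hgu : g u₂ = g u := head_eq_of_mem_TV (hx'b ▸ hx') hb'
        have huu : u₂ = u := hginj u₂ hu₂ u hu hgu
        subst huu
        refine ⟨x, Finset.mem_coe.2 hx, ?_⟩
        show (F (p :: x)).tail = b
        rw [hFx, hx'b]
        rfl
    · show (F [p, u]).tail = [g u]
      rw [(hstep1 u hu).1]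
      rfl
    · intro a b ha hb
      constructor
      · intro hab
        have hedge : (p :: a, p :: b) ∈ TE S (d+1) p := (cons_mem_TE_succ ha hu).2 hab
        have h2 := (hFE (p :: a) (p :: b) (hconsmem u hu a ha) (hconsmem u hu b hb)).1 hedge
        obtain ⟨a', ha', hFa⟩ := hsub' u hu a ha
        obtain ⟨b', hb', hFb⟩ := hsub' u hu b hb
        show ((F (p :: a)).tail, (F (p :: b)).tail) ∈ TE S d (g u)
        rw [hFa, hFb] at h2 ⊢
        simp only [List.tail_cons]
        exact (cons_mem_TE_succ ha' (hstep1 u hu).2).1 h2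
      · intro hab
        obtain ⟨a', ha', hFa⟩ := hsub' u hu a ha
        obtain ⟨b', hb', hFb⟩ := hsub' u hu b hb
        change ((F (p :: a)).tail, (F (p :: b)).tail) ∈ TE S d (g u) at hab
        rw [hFa, hFb] at hab
        simp only [List.tail_cons] at hab
        have hedge : (q :: a', q :: b') ∈ TE S (d+1) q :=
          (cons_mem_TE_succ ha' (hstep1 u hu).2).2 hab
        have h2 : (p :: a, p :: b) ∈ TE S (d+1) p := by
          refine (hFE (p :: a) (p :: b) (hconsmem u hu a ha) (hconsmem u hu b hb)).2 ?_
          rw [hFa, hFb]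
          exact hedge
        exact (cons_mem_TE_succ ha hu).1 h2

end IsoDecomp
section RefineLemmas
variable {V T : Type} [DecidableEq V] [LinearOrder T]

lemma refine_eq_of_map_eq (E : Finset (V × V × T)) :
    ∀ d, ∀ p q : V × T,
      (Sc E p).val.map (fun u => refine E (fun _ _ => ()) d u.1 u.2) =
        (Sc E q).val.map (fun u => refine E (fun _ _ => ()) d u.1 u.2) →
      refine E (fun _ _ => ()) d p.1 p.2 = refine E (fun _ _ => ()) d q.1 q.2 := by
  intro d
  induction d with
  | zero => intro p q _; rfl
  | succ d ih =>
    intro p q h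
    have hd : (Sc E p).val.map (fun u => refine E (fun _ _ => ()) d u.1 u.2) =
        (Sc E q).val.map (fun u => refine E (fun _ _ => ()) d u.1 u.2) := by
      have h2 := congrArg (Multiset.map (fun c : ColorT Unit (d+1) => c.1)) h
      rw [Multiset.map_map, Multiset.map_map] at h2
      exact h2
    show ((refine E (fun _ _ => ()) d p.1 p.2,
        (Sc E p).val.map (fun u => refine E (fun _ _ => ()) d u.1 u.2)) :
        ColorT Unit d × Multiset (ColorT Unit d)) =
      (refine E (fun _ _ => ()) d q.1 q.2,
        (Sc E q).val.map (fun u => refine E (fun _ _ => ()) d u.1 u.2))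
    rw [ih p q hd, hd]

end RefineLemmas

theorem color_eq_iff_causal_tree_iso' (E : Finset (V × V × T)) (d : ℕ) (p q : V × T) :
    refine E (fun _ _ => (() : Unit)) d p.1 p.2 = refine E (fun _ _ => ()) d q.1 q.2 ↔
    IsoAt (Sc E) d p q := by
  induction d generalizing p q with
  | zero =>
    constructor
    · intro _; exact isoAt_zero p q
    · intro _; rfl
  | succ d ih =>
    constructor
    · intro h
      have hmap : (Sc E p).val.map (fun u => refine E (fun _ _ => ()) d u.1 u.2) =
          (Sc E q).val.map (fun u => refine E (fun _ _ => ()) d u.1 u.2) :=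
        congrArg (fun c : ColorT Unit (d+1) => c.2) h
      obtain ⟨g, hg, hrel⟩ := exists_bijOn_of_map_eq
        (fun u : V × T => refine E (fun _ _ => ()) d u.1 u.2)
        (Sc E p).card (Sc E p) (Sc E q) rfl hmap
      refine isoAt_succ_of g hg ?_
      intro u hu
      exact (ih u (g u)).1 (hrel u hu).symm
    · intro h
      obtain ⟨g, hg, hiso⟩ := isoAt_succ_to h
      have hmap := map_eq_of_bijOn
        (fun u : V × T => refine E (fun _ _ => ()) d u.1 u.2)
        (Sc E p) (Sc E q) g hg
        (fun u hu => ((ih u (g u)).2 (hiso u hu)).symm)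
      show ((refine E (fun _ _ => ()) d p.1 p.2,
          (Sc E p).val.map (fun u => refine E (fun _ _ => ()) d u.1 u.2)) :
          ColorT Unit d × Multiset (ColorT Unit d)) =
        (refine E (fun _ _ => ()) d q.1 q.2,
          (Sc E q).val.map (fun u => refine E (fun _ _ => ()) d u.1 u.2))
      rw [refine_eq_of_map_eq E d p q hmap, hmap]

/-- **Colors characterize causal trees.** Two temporal nodes have equal refinement colors at
depth `d` (starting from uniform initial colors) iff their depth-`d` causal trees are
isomorphic as rooted trees (a bijection of nodes preserving the root and the edge relation). -/
theorem color_eq_iff_causal_tree_iso (E : Finset (V × V × T)) (d : ℕ) (p q : V × T) :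
    refine E (fun _ _ => (() : Unit)) d p.1 p.2 = refine E (fun _ _ => ()) d q.1 q.2 ↔
    ∃ f : List (V × T) → List (V × T),
      Set.BijOn f (↑(TV (Sc E) d p)) (↑(TV (Sc E) d q)) ∧
      f [p] = [q] ∧
      ∀ a b, a ∈ TV (Sc E) d p → b ∈ TV (Sc E) d p →
        ((a, b) ∈ TE (Sc E) d p ↔ (f a, f b) ∈ TE (Sc E) d q) :=
  color_eq_iff_causal_tree_iso' E d p q
end
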